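/- arXiv:math/0508112 — 2 statements merged into one kernel-verified Lean document; each statement's English description precedes it below -/
import Mathlib

section
/- For 1 ≤ k ≤ n and any integer d ≥ 0, A(n,d,k) = Σ_{j≥0} (-1)^{d-j} C(n, d-j) j^{k-1} (j+1)^{n-k}, where 0^0 = 1 and the sum is over 0 ≤ j ≤ d. -/
open Finset

/-- Number of descents of a permutation of `Fin n` (positions `i` with `π(i) > π(i+1)`). -/
def descents (n : ℕ) (π : Equiv.Perm (Fin n)) : ℕ :=
  (Finset.univ.filter (fun i : Fin n =>
    ∃ j : Fin n, (j : ℕ) = (i : ℕ) + 1 ∧ π j < π i)).card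

/-- `A n d k` : number of permutations of `{1,…,n}` with exactly `d` descents and first value `k`
(1-based values; `d : ℤ`, so `A n d k = 0` when `d < 0`). -/
def A (n : ℕ) (d : ℤ) (k : ℕ) : ℕ :=
  (Finset.univ.filter (fun π : Equiv.Perm (Fin n) =>
    (descents n π : ℤ) = d ∧ ∃ i : Fin n, (i : ℕ) = 0 ∧ (π i : ℕ) + 1 = k)).card

/-- `Alast n d k` : number with `d` descents and last value `k`. -/
def Alast (n : ℕ) (d : ℤ) (k : ℕ) : ℕ :=
  (Finset.univ.filter (fun π : Equiv.Perm (Fin n) =>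
    (descents n π : ℤ) = d ∧ ∃ i : Fin n, (i : ℕ) + 1 = n ∧ (π i : ℕ) + 1 = k)).card

/-- Eulerian number: permutations of `{1,…,n}` with `d` descents. -/
def Eul (n : ℕ) (d : ℤ) : ℕ :=
  (Finset.univ.filter (fun π : Equiv.Perm (Fin n) => (descents n π : ℤ) = d)).card

/-! Deleting the first entry `k` of a permutation of `{1, …, n + 1}` and standardising the rest is
a bijection onto the permutations `σ` of `{1, …, n}`; it loses one descent exactly when
`σ(1) < k`. So the series `A_{n,k}(t) = ∑_d A(n, d, k) tᵈ` satisfy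
`A_{n+1,k} = t ∑_{v<k} A_{n,v} + ∑_{v≥k} A_{n,v}`, with `A_{1,1} = 1`. The series
`(1 - t)ⁿ ∑_j j^(k-1) (j+1)^(n-k) tʲ`, whose coefficients are the right-hand side, obey the same
recursion: after cancelling `(1 - t)ⁿ`, the two partial sums are geometric sums with ratio
`j / (j + 1)` and `(j + 1) / (j + 2)` that telescope to the required difference. -/

open Equiv

theorem descents_succ_eq_card (m : ℕ) (π : Perm (Fin (m + 1))) :
    descents (m + 1) π = #{t : Fin m | π t.succ < π t.castSucc} := by
  rw [descents, card_filter, card_filter, Fin.sum_univ_castSucc]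
  have hlast : ¬∃ j : Fin (m + 1), (j : ℕ) = (Fin.last m : ℕ) + 1 ∧ π j < π (Fin.last m) := by
    rintro ⟨j, hj, -⟩
    rw [Fin.val_last] at hj
    omega
  rw [if_neg hlast, add_zero]
  refine sum_congr rfl fun t _ => if_congr ⟨?_, fun h => ⟨t.succ, by simp, h⟩⟩ rfl rfl
  rintro ⟨j, hj, h⟩
  rwa [show j = t.succ from Fin.ext (by simpa using hj)] at h

def consPerm {m : ℕ} (a : Fin (m + 1)) (σ : Perm (Fin m)) : Perm (Fin (m + 1)) :=
  a.cycleRange.symm * Perm.decomposeFin.symm (0, σ)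

@[simp]
theorem consPerm_apply_zero {m : ℕ} (a : Fin (m + 1)) (σ : Perm (Fin m)) : consPerm a σ 0 = a := by
  simp [consPerm]

@[simp]
theorem consPerm_apply_succ {m : ℕ} (a : Fin (m + 1)) (σ : Perm (Fin m)) (j : Fin m) :
    consPerm a σ j.succ = a.succAbove (σ j) := by
  simp [consPerm]

theorem consPerm_injective {m : ℕ} (a : Fin (m + 1)) : Function.Injective (consPerm a) := by
  intro σ τ h
  simpa using Perm.decomposeFin.symm.injective (mul_left_cancel h)

theorem exists_consPerm_eq {m : ℕ} (π : Perm (Fin (m + 1))) : ∃ σ, consPerm (π 0) σ = π := by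
  obtain ⟨⟨a, σ⟩, h⟩ := Perm.decomposeFin.symm.surjective ((π 0).cycleRange * π)
  obtain rfl : a = 0 := by simpa using congrArg (· 0) h
  refine ⟨σ, ?_⟩
  rw [consPerm, h, ← mul_assoc, ← Perm.inv_def, inv_mul_cancel, one_mul]

theorem descents_consPerm {m : ℕ} (a : Fin (m + 2)) (σ : Perm (Fin (m + 1))) :
    descents (m + 2) (consPerm a σ) = descents (m + 1) σ + if (σ 0).castSucc < a then 1 else 0 := by
  rw [descents_succ_eq_card, descents_succ_eq_card, card_filter, card_filter, Fin.sum_univ_succ,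
    add_comm]
  congr 1
  · refine sum_congr rfl fun t _ => ?_
    simp only [← Fin.succ_castSucc, consPerm_apply_succ, Fin.succAbove_lt_succAbove_iff]
  · simp only [Fin.castSucc_zero, consPerm_apply_zero, consPerm_apply_succ,
      Fin.succAbove_lt_iff_castSucc_lt]

theorem A_succ_eq_card (m : ℕ) (d : ℤ) (k : ℕ) :
    A (m + 1) d k = #{π : Perm (Fin (m + 1)) | (descents (m + 1) π : ℤ) = d ∧ (π 0 : ℕ) + 1 = k} := by
  refine congrArg card (filter_congr fun π _ => and_congr_right fun _ => ⟨?_, fun h => ⟨0, rfl, h⟩⟩)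
  rintro ⟨i, hi, h⟩
  rwa [show i = 0 from Fin.ext hi] at h

theorem A_of_neg (n : ℕ) {d : ℤ} (hd : d < 0) (k : ℕ) : A n d k = 0 := by
  refine card_eq_zero.mpr (filter_false_of_mem fun π _ h => ?_)
  omega

theorem A_one_one (d : ℤ) : A 1 d 1 = if d = 0 then 1 else 0 := by
  have hdes (π : Perm (Fin 1)) : descents 1 π = 0 := by
    simp [descents_succ_eq_card]
  by_cases hd : d = 0 <;> simp [A_succ_eq_card, hdes, eq_comm, hd]

theorem A_succ_succ_eq_card (m : ℕ) (d : ℤ) {k : ℕ} (hk1 : 1 ≤ k) (hk : k ≤ m + 2) :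
    A (m + 2) d k = #{σ : Perm (Fin (m + 1)) |
      (descents (m + 1) σ : ℤ) = if (σ 0 : ℕ) + 1 < k then d - 1 else d} := by
  let a : Fin (m + 2) := ⟨k - 1, by omega⟩
  have hdes (σ : Perm (Fin (m + 1))) : (descents (m + 2) (consPerm a σ) : ℤ) =
      descents (m + 1) σ + if (σ 0 : ℕ) + 1 < k then 1 else 0 := by
    have ha : (σ 0).castSucc < a ↔ (σ 0 : ℕ) + 1 < k := by
      rw [Fin.lt_def, Fin.val_castSucc]
      show (σ 0 : ℕ) < k - 1 ↔ _
      omega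
    simp only [descents_consPerm, ha]; push_cast; rfl
  rw [A_succ_eq_card]
  refine (card_nbij (consPerm a) (fun σ hσ => ?_) (consPerm_injective a).injOn
    (fun π hπ => ?_)).symm
  · simp only [coe_filter, Set.mem_ofPred_eq, mem_univ, true_and] at hσ ⊢
    rw [hdes, consPerm_apply_zero]
    refine ⟨?_, Nat.sub_add_cancel hk1⟩
    split_ifs at hσ ⊢ <;> omega
  · simp only [coe_filter, Set.mem_ofPred_eq, mem_univ, true_and] at hπ
    change (descents (m + 2) π : ℤ) = d ∧ _ at hπ
    obtain ⟨σ, hσ⟩ := exists_consPerm_eq π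
    rw [show π 0 = a from Fin.ext (show (π 0 : ℕ) = k - 1 by omega)] at hσ
    refine ⟨σ, ?_, hσ⟩
    have := hdes σ
    rw [hσ] at this
    simp only [coe_filter, Set.mem_ofPred_eq, mem_univ, true_and]
    split_ifs at this ⊢ <;> omega

theorem A_succ_succ (m : ℕ) (d : ℤ) {k : ℕ} (hk1 : 1 ≤ k) (hk : k ≤ m + 2) :
    A (m + 2) d k = ∑ v ∈ range (m + 1), A (m + 1) (if v + 1 < k then d - 1 else d) (v + 1) := by
  rw [A_succ_succ_eq_card m d hk1 hk, card_eq_sum_card_fiberwise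
    (f := fun σ : Perm (Fin (m + 1)) => (σ 0 : ℕ)) (fun σ _ => mem_range.mpr (σ 0).isLt)]
  refine sum_congr rfl fun v _ => ?_
  rw [filter_filter, A_succ_eq_card]
  refine congrArg card (filter_congr fun σ _ => ⟨?_, ?_⟩)
  · rintro ⟨h, rfl⟩
    exact ⟨h, rfl⟩
  · rintro ⟨h, hv⟩
    obtain rfl : (σ 0 : ℕ) = v := by omega
    exact ⟨h, rfl⟩

theorem geom_sum₂_add_one {R : Type*} [CommRing R] (x : R) (p : ℕ) :
    ∑ i ∈ range p, x ^ i * (x + 1) ^ (p - 1 - i) = (x + 1) ^ p - x ^ p := by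
  have h := geom_sum₂_mul x (x + 1) p
  rw [show x - (x + 1) = -1 by ring, mul_neg_one] at h
  linear_combination -h

theorem add_one_pow_mul_sub_pow_mul_eq_sum {R : Type*} [CommRing R] (x : R) {n k : ℕ}
    (hk1 : 1 ≤ k) (hk : k ≤ n + 2) :
    (x + 1) ^ (k - 1) * (x + 1 + 1) ^ (n + 2 - k) - x ^ (k - 1) * (x + 1) ^ (n + 2 - k) =
      ∑ v ∈ range (n + 1), if v + 1 < k then x ^ v * (x + 1) ^ (n - v)
        else (x + 1) ^ v * (x + 1 + 1) ^ (n - v) := by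
  have hlow : ∑ v ∈ range (k - 1), x ^ v * (x + 1) ^ (n - v) =
      (x + 1) ^ (n + 2 - k) * ((x + 1) ^ (k - 1) - x ^ (k - 1)) := by
    rw [← geom_sum₂_add_one, mul_sum]
    refine sum_congr rfl fun v hv => ?_
    rw [mem_range] at hv
    rw [show n - v = (n + 2 - k) + (k - 1 - 1 - v) by omega, pow_add]
    ring
  have hhigh : ∑ t ∈ range (n + 2 - k), (x + 1) ^ (k - 1 + t) * (x + 1 + 1) ^ (n - (k - 1 + t)) =
      (x + 1) ^ (k - 1) * ((x + 1 + 1) ^ (n + 2 - k) - (x + 1) ^ (n + 2 - k)) := by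
    rw [← geom_sum₂_add_one, mul_sum]
    refine sum_congr rfl fun t ht => ?_
    rw [mem_range] at ht
    rw [show n - (k - 1 + t) = n + 2 - k - 1 - t by omega, pow_add]
    ring
  rw [show n + 1 = (k - 1) + (n + 2 - k) by omega, sum_range_add,
    sum_congr rfl fun v hv => if_pos (by rw [mem_range] at hv; omega),
    sum_congr rfl fun t _ => if_neg (by omega), hlow, hhigh]
  ring

open PowerSeries

theorem PowerSeries.coeff_one_sub_X_pow {R : Type*} [CommRing R] (n d : ℕ) :
    coeff d ((1 - X : R⟦X⟧) ^ n) = (-1) ^ d * n.choose d := by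
  have : (1 - X : R⟦X⟧) = rescale (-1) (1 + X) := by simp [sub_eq_add_neg]
  rw [this, ← map_pow, coeff_rescale, add_comm, add_pow, map_sum]
  simp only [one_pow, mul_one, ← Nat.cast_comm, ← nsmul_eq_mul, map_nsmul, coeff_X_pow]
  simp only [smul_ite, nsmul_eq_mul, mul_one, sum_ite_eq, mem_range,
    Order.lt_add_one_iff, mul_ite, mul_zero]
  split_ifs with h
  · ring
  · simp [Nat.choose_eq_zero_of_lt (by omega : n < d)]

noncomputable def closedFormGF (n k : ℕ) : ℤ⟦X⟧ :=
  (1 - X) ^ n * PowerSeries.mk fun j => (j : ℤ) ^ (k - 1) * ((j : ℤ) + 1) ^ (n - k)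

theorem coeff_closedFormGF (n k d : ℕ) :
    coeff d (closedFormGF n k) = ∑ j ∈ range (d + 1),
      (-1 : ℤ) ^ (d - j) * (n.choose (d - j) : ℤ) * (j : ℤ) ^ (k - 1) * ((j : ℤ) + 1) ^ (n - k) := by
  rw [closedFormGF, mul_comm, coeff_mul, Nat.sum_antidiagonal_eq_sum_range_succ
    (fun i j => coeff i (PowerSeries.mk _) * coeff j ((1 - X : ℤ⟦X⟧) ^ n))]
  refine sum_congr rfl fun j _ => ?_
  rw [coeff_mk, coeff_one_sub_X_pow]
  ring

theorem closedFormGF_one_one : closedFormGF 1 1 = 1 := by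
  rw [closedFormGF, mul_comm]
  convert mk_one_mul_one_sub_eq_one ℤ using 2
  · ext; simp
  · simp

theorem closedFormGF_succ_succ (m : ℕ) {k : ℕ} (hk1 : 1 ≤ k) (hk : k ≤ m + 2) :
    closedFormGF (m + 2) k =
      ∑ v ∈ range (m + 1), (if v + 1 < k then X else 1) * closedFormGF (m + 1) (v + 1) := by
  suffices h : (1 - X) * PowerSeries.mk (fun j => (j : ℤ) ^ (k - 1) * ((j : ℤ) + 1) ^ (m + 2 - k)) =
      ∑ v ∈ range (m + 1), (if v + 1 < k then X else 1) *
        PowerSeries.mk (fun j => (j : ℤ) ^ v * ((j : ℤ) + 1) ^ (m - v)) by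
    simp only [closedFormGF, pow_succ _ (m + 1), mul_assoc, h, mul_sum]
    refine sum_congr rfl fun v _ => ?_
    rw [Nat.add_sub_cancel, Nat.add_sub_add_right, mul_left_comm]
  ext (_ | j)
  · simp only [sub_mul, one_mul, ite_mul, map_sub, map_sum, apply_ite (coeff 0), coeff_zero_X_mul,
      coeff_mk, Nat.cast_zero, sub_zero, zero_add, one_pow, mul_one]
    obtain rfl | hk2 := eq_or_lt_of_le hk1
    · simp [sum_range_succ']
    · rw [zero_pow (by omega)]
      refine (sum_eq_zero fun v hv => ?_).symm
      split_ifs with h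
      · rfl
      · exact zero_pow (by omega)
  · simp only [sub_mul, one_mul, ite_mul, map_sub, map_sum, apply_ite (coeff (j + 1)),
      coeff_succ_X_mul, coeff_mk]
    push_cast
    exact add_one_pow_mul_sub_pow_mul_eq_sum _ hk1 hk

noncomputable def descentGF (n k : ℕ) : ℤ⟦X⟧ :=
  PowerSeries.mk fun d => (A n d k : ℤ)

theorem coeff_X_mul_descentGF (n k d : ℕ) :
    coeff d ((X : ℤ⟦X⟧) * descentGF n k) = A n ((d : ℤ) - 1) k := by
  cases d with
  | zero => simp [A_of_neg]
  | succ d => simp [descentGF, coeff_succ_X_mul]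

theorem descentGF_one_one : descentGF 1 1 = 1 := by
  ext d
  simp [descentGF, A_one_one, coeff_one]

theorem descentGF_succ_succ (m : ℕ) {k : ℕ} (hk1 : 1 ≤ k) (hk : k ≤ m + 2) :
    descentGF (m + 2) k =
      ∑ v ∈ range (m + 1), (if v + 1 < k then X else 1) * descentGF (m + 1) (v + 1) := by
  ext d
  rw [descentGF, coeff_mk, A_succ_succ m d hk1 hk, map_sum]
  push_cast
  refine sum_congr rfl fun v _ => ?_
  split_ifs
  · rw [coeff_X_mul_descentGF]
  · rw [one_mul, descentGF, coeff_mk]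

theorem descentGF_eq_closedFormGF {n k : ℕ} (hk1 : 1 ≤ k) (hkn : k ≤ n) :
    descentGF n k = closedFormGF n k := by
  induction n generalizing k with
  | zero => omega
  | succ n ih =>
    rcases n with _ | m
    · obtain rfl : k = 1 := by omega
      rw [descentGF_one_one, closedFormGF_one_one]
    · rw [descentGF_succ_succ m hk1 hkn, closedFormGF_succ_succ m hk1 hkn]
      exact sum_congr rfl fun v hv => by rw [ih (by omega) (by rw [mem_range] at hv; omega)]

theorem stmt6 (n : ℕ) (d : ℕ) (k : ℕ) (hk1 : 1 ≤ k) (hkn : k ≤ n) :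
    (A n (d : ℤ) k : ℤ) =
      ∑ j ∈ Finset.range (d + 1),
        (-1 : ℤ) ^ (d - j) * (n.choose (d - j) : ℤ) * (j : ℤ) ^ (k - 1) * ((j : ℤ) + 1) ^ (n - k) := by
  rw [← coeff_closedFormGF, ← descentGF_eq_closedFormGF hk1 hkn, descentGF, coeff_mk]
end

section
/- For 0 ≤ d ≤ n-1, Σ_{k=1}^{n} k·A(n,d,k) = (d+1)·A(n,d); equivalently, if π is chosen uniformly from permutations of {1,...,n} with exactly d descents, then E[π(1)] = d+1. -/
open Finset

/-!
With 0-based values, the claim says that `π(0) - des π` sums to zero over the permutations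
with `d` descents. Every permutation of `{0,…,m}` arises exactly once by inserting `m` into a
permutation `τ` of `{0,…,m-1}` at one of the `m+1` slots. If `τ` has `e` descents, the `e+1`
slots right after a descent or at the end keep `e` descents and the first value; the other
`m-e` slots add a descent, and among them the front slot raises the first value to `m`.
Summing `π(0) - des π` over the insertions with a fixed number of descents therefore gives
`(e+1)(τ(0) - e)` or `(m-e-1)(τ(0) - e)`, and the claim follows by induction on `n`.
-/

lemma sum_mul_card_fiber {ι : Type*} (s : Finset ι) (f : ι → ℕ) {t : Finset ℕ}
    (h : ∀ i ∈ s, f i ∈ t) : ∑ k ∈ t, k * #{i ∈ s | f i = k} = ∑ i ∈ s, f i := by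
  rw [← sum_fiberwise_of_maps_to h]
  refine sum_congr rfl fun k _ => ?_
  rw [sum_congr rfl fun i hi => (mem_filter.1 hi).2, sum_const, smul_eq_mul, mul_comm]

def wordDescents (L : ℕ) (v : ℕ → ℕ) : ℕ := #{i ∈ range L | v (i + 1) < v i}

def insertAt (p M : ℕ) (v : ℕ → ℕ) (i : ℕ) : ℕ :=
  if i < p then v i else if i = p then M else v (i - 1)

lemma wordDescents_succ (L : ℕ) (v : ℕ → ℕ) :
    wordDescents (L + 1) v = wordDescents L (fun i => v (i + 1)) + if v 1 < v 0 then 1 else 0 := by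
  simp only [wordDescents, card_filter, sum_range_succ']

lemma insertAt_apply_zero (p M : ℕ) (v : ℕ → ℕ) :
    insertAt p M v 0 = if p = 0 then M else v 0 := by
  grind [insertAt]

lemma insertAt_succ_shift (p M : ℕ) (v : ℕ → ℕ) :
    (fun i => insertAt (p + 1) M v (i + 1)) = insertAt p M (fun i => v (i + 1)) := by
  funext i
  grind [insertAt]

lemma insertAt_succAbove {m : ℕ} (p : Fin (m + 1)) (M : ℕ) (v : ℕ → ℕ) (j : Fin m) :
    insertAt p M v (p.succAbove j) = v j := by
  unfold Fin.succAbove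
  grind [insertAt]

lemma wordDescents_insertAt {p m M : ℕ} {v : ℕ → ℕ} (hp : p ≤ m) (hv : ∀ i < m, v i < M) :
    wordDescents m (insertAt p M v) + (if p = m ∨ (0 < p ∧ v p < v (p - 1)) then 1 else 0)
      = wordDescents (m - 1) v + 1 := by
  induction p generalizing m v with
  | zero =>
    obtain _ | m := m
    · simp [wordDescents]
    · simp [wordDescents_succ, insertAt, hv 0 m.succ_pos]
  | succ p ih =>
    obtain _ | m := m
    · omega
    have ih' := ih (m := m) (v := fun j => v (j + 1)) (by omega) (fun i hi => hv _ (by omega))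
    rw [wordDescents_succ, insertAt_succ_shift, Nat.add_sub_cancel]
    obtain _ | m := m
    · obtain rfl : p = 0 := by omega
      simp [wordDescents, insertAt, (hv 0 one_pos).not_gt]
    rw [Nat.add_sub_cancel, wordDescents_succ m v]
    have hv0 := hv 0 (by omega)
    obtain _ | p := p <;> grind [insertAt]

lemma wordDescents_insertAt_zero {m M : ℕ} (hm : 1 ≤ m) {v : ℕ → ℕ} (hv : ∀ i < m, v i < M) :
    wordDescents m (insertAt 0 M v) = wordDescents (m - 1) v + 1 := by
  simpa [show 0 ≠ m by omega] using wordDescents_insertAt (Nat.zero_le m) hv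

def quietSlots (m : ℕ) (v : ℕ → ℕ) : Finset ℕ := {q ∈ range m | q + 1 = m ∨ v (q + 1) < v q}

lemma wordDescents_insertAt_succ {m M q : ℕ} (hq : q < m) {v : ℕ → ℕ} (hv : ∀ i < m, v i < M) :
    wordDescents m (insertAt (q + 1) M v) =
      if q ∈ quietSlots m v then wordDescents (m - 1) v else wordDescents (m - 1) v + 1 := by
  have := wordDescents_insertAt (p := q + 1) hq hv
  simp only [quietSlots, mem_filter, mem_range, hq, true_and, Nat.add_sub_cancel] at this ⊢
  split_ifs at this ⊢ <;> omega

lemma card_quietSlots {m : ℕ} (hm : 1 ≤ m) (v : ℕ → ℕ) :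
    #(quietSlots m v) = wordDescents (m - 1) v + 1 := by
  obtain ⟨m, rfl⟩ : ∃ k, m = k + 1 := ⟨m - 1, by omega⟩
  rw [quietSlots, wordDescents, range_add_one, filter_insert, if_pos (Or.inl rfl),
    card_insert_of_notMem (by simp), Nat.add_sub_cancel]
  congr 2
  exact filter_congr fun q hq => by simp at hq; omega

lemma sum_insertAt_first_sub {m : ℕ} (hm : 1 ≤ m) {v : ℕ → ℕ} (hv : ∀ i < m, v i < m) (d : ℕ) :
    ∑ p ∈ range (m + 1),
        (if wordDescents m (insertAt p m v) = d then (insertAt p m v 0 : ℤ) - d else 0)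
      = (if d = wordDescents (m - 1) v then (wordDescents (m - 1) v + 1 : ℤ)
          else if d = wordDescents (m - 1) v + 1 then (m - wordDescents (m - 1) v - 1 : ℤ) else 0)
        * ((v 0 : ℤ) - wordDescents (m - 1) v) := by
  set e := wordDescents (m - 1) v
  set Q := quietSlots m v
  have hQ : #Q = e + 1 := card_quietSlots hm v
  have hQsub : Q ⊆ range m := filter_subset _ _
  have hQc : #(range m \ Q) = m - (e + 1) := by rw [card_sdiff_of_subset hQsub, card_range, hQ]
  have hem : e + 1 ≤ m := hQ ▸ card_range m ▸ card_le_card hQsub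
  have h0 : wordDescents m (insertAt 0 m v) = e + 1 := wordDescents_insertAt_zero hm hv
  rw [sum_range_succ', h0, insertAt_apply_zero, if_pos rfl]
  have hsplit : ∀ q ∈ range m,
      (if wordDescents m (insertAt (q + 1) m v) = d then (insertAt (q + 1) m v 0 : ℤ) - d else 0)
        = if q ∈ Q then (if e = d then (v 0 : ℤ) - d else 0)
          else (if e + 1 = d then (v 0 : ℤ) - d else 0) := by
    intro q hq
    rw [wordDescents_insertAt_succ (mem_range.1 hq) hv, insertAt_apply_zero, if_neg q.succ_ne_zero]
    split_ifs <;> rfl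
  rw [sum_congr rfl hsplit, sum_ite, filter_mem_eq_inter, inter_eq_right.2 hQsub,
    filter_notMem_eq_sdiff, sum_const, sum_const, hQ, hQc, nsmul_eq_mul, nsmul_eq_mul]
  push_cast [Nat.cast_sub hem]
  by_cases hde : d = e
  · subst hde
    simp
  by_cases hde' : d = e + 1
  · subst hde'
    simp only [Nat.add_eq_left, Nat.left_eq_add, one_ne_zero, ↓reduceIte, mul_zero, zero_add,
      Nat.cast_add, Nat.cast_one]
    ring
  · simp [hde, hde', Ne.symm hde, Ne.symm hde']

def permWord {n : ℕ} (π : Equiv.Perm (Fin n)) (i : ℕ) : ℕ := if h : i < n then π ⟨i, h⟩ else 0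

lemma permWord_lt {n : ℕ} (π : Equiv.Perm (Fin n)) {i : ℕ} (hi : i < n) : permWord π i < n := by
  simp [permWord, hi]

lemma descents_eq_wordDescents {n : ℕ} (π : Equiv.Perm (Fin n)) :
    descents n π = wordDescents (n - 1) (permWord π) := by
  unfold descents wordDescents
  refine card_bij (fun i _ => i) ?_ (fun _ _ _ _ => Fin.ext) ?_
  · intro i hi
    simp only [mem_filter, mem_univ, true_and] at hi
    obtain ⟨j, hj, hlt⟩ := hi
    have hi1 : (i : ℕ) + 1 < n := hj ▸ j.is_lt
    rw [mem_filter, mem_range]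
    simp only [permWord, dif_pos i.is_lt, dif_pos hi1]
    obtain rfl : j = ⟨i + 1, hi1⟩ := Fin.ext hj
    exact ⟨by omega, hlt⟩
  · intro i hi
    rw [mem_filter, mem_range] at hi
    have hi1 : i + 1 < n := by omega
    refine ⟨⟨i, by omega⟩, ?_, rfl⟩
    simp only [permWord, dif_pos hi1, dif_pos (show i < n by omega)] at hi
    simpa using ⟨⟨i + 1, hi1⟩, rfl, hi.2⟩

def insertMax {m : ℕ} (p : Fin (m + 1)) (τ : Equiv.Perm (Fin m)) : Equiv.Perm (Fin (m + 1)) :=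
  ((finSuccEquiv' p).trans (Equiv.optionCongr τ)).trans (finSuccEquiv' (Fin.last m)).symm

@[simp]
lemma insertMax_apply_self {m : ℕ} (p : Fin (m + 1)) (τ : Equiv.Perm (Fin m)) :
    insertMax p τ p = Fin.last m := by
  simp [insertMax, finSuccEquiv'_at]

@[simp]
lemma insertMax_apply_succAbove {m : ℕ} (p : Fin (m + 1)) (τ : Equiv.Perm (Fin m)) (j : Fin m) :
    insertMax p τ (p.succAbove j) = (τ j).castSucc := by
  simp [insertMax, finSuccEquiv'_succAbove, Fin.succAbove_last]

lemma bijective_insertMax {m : ℕ} :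
    Function.Bijective (fun x : Fin (m + 1) × Equiv.Perm (Fin m) => insertMax x.1 x.2) := by
  refine (Fintype.bijective_iff_injective_and_card _).2 ⟨?_, ?_⟩
  · rintro ⟨p, τ⟩ ⟨p', τ'⟩ h
    obtain rfl : p = p' := (insertMax p' τ').injective <| by
      simp only at h
      rw [insertMax_apply_self, ← h, insertMax_apply_self]
    refine Prod.ext rfl (Equiv.ext fun j => Fin.castSucc_injective _ ?_)
    simpa using congrArg (· (p.succAbove j)) h
  · simp [Fintype.card_perm, Nat.factorial_succ]

lemma permWord_insertMax {m : ℕ} (p : Fin (m + 1)) (τ : Equiv.Perm (Fin m)) :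
    permWord (insertMax p τ) = insertAt p m (permWord τ) := by
  funext i
  by_cases hi : i < m + 1
  · obtain ⟨x, rfl⟩ : ∃ x : Fin (m + 1), (x : ℕ) = i := ⟨⟨i, hi⟩, rfl⟩
    refine Fin.succAboveCases p ?_ (fun j => ?_) x
    · simp [permWord, insertAt, Fin.is_le]
    · simp [permWord, insertAt_succAbove, Fin.is_le]
  · simp only [permWord, insertAt, dif_neg hi]
    split_ifs <;> omega

lemma sum_insertMax_first_sub {m : ℕ} (hm : 1 ≤ m) (τ : Equiv.Perm (Fin m)) (d : ℕ) :
    ∑ p : Fin (m + 1), (if descents (m + 1) (insertMax p τ) = d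
        then (permWord (insertMax p τ) 0 : ℤ) - d else 0)
      = (if d = descents m τ then (descents m τ + 1 : ℤ)
          else if d = descents m τ + 1 then (m - descents m τ - 1 : ℤ) else 0)
        * ((permWord τ 0 : ℤ) - descents m τ) := by
  simp only [descents_eq_wordDescents, permWord_insertMax, Nat.add_sub_cancel]
  exact (Fin.sum_univ_eq_sum_range (fun p => if wordDescents m (insertAt p m (permWord τ)) = d
      then (insertAt p m (permWord τ) 0 : ℤ) - d else 0) (m + 1)).trans
    (sum_insertAt_first_sub hm (fun _ hi => permWord_lt τ hi) d)

theorem sum_permWord_zero_sub_eq_zero {n : ℕ} (hn : 1 ≤ n) (d : ℕ) :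
    ∑ π with descents n π = d, ((permWord π 0 : ℤ) - d) = 0 := by
  induction n, hn using Nat.le_induction generalizing d with
  | base =>
    refine sum_eq_zero fun π hπ => ?_
    rw [← (mem_filter.1 hπ).2, descents_eq_wordDescents]
    simp [permWord, wordDescents]
  | succ m hm ih =>
    rw [sum_filter, ← bijective_insertMax.sum_comp, Fintype.sum_prod_type, sum_comm]
    simp only [sum_insertMax_first_sub hm]
    rw [← sum_fiberwise_of_maps_to (fun τ _ => mem_image_of_mem (descents m) (mem_univ τ))]
    refine sum_eq_zero fun e _ => ?_
    rw [sum_congr rfl fun τ hτ => by rw [(mem_filter.1 hτ).2], ← mul_sum, ih, mul_zero]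

theorem sum_permWord_zero_add_one {n : ℕ} (hn : 1 ≤ n) (d : ℕ) :
    ∑ π with descents n π = d, (permWord π 0 + 1) = (d + 1) * #{π | descents n π = d} := by
  have h := sum_permWord_zero_sub_eq_zero hn d
  rw [sum_sub_distrib, sum_const, nsmul_eq_mul, sub_eq_zero] at h
  rw [sum_add_distrib, sum_const, smul_eq_mul, mul_one]
  have h' : ∑ π with descents n π = d, permWord π 0 = #{π | descents n π = d} * d := by
    exact_mod_cast h
  rw [h']
  ring

theorem stmt7_general (n : ℕ) (hn : 1 ≤ n) (d : ℕ) :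
    ∑ k ∈ Finset.Icc 1 n, k * A n (d : ℤ) k = (d + 1) * Eul n (d : ℤ) := by
  have hA : ∀ k, A n d k = #{π ∈ {π | descents n π = d} | permWord π 0 + 1 = k} := by
    intro k
    simp only [A, filter_filter, Nat.cast_inj]
    congr! 3 with π
    rw [permWord, dif_pos (show 0 < n from hn)]
    exact ⟨fun ⟨i, hi, hk⟩ => (Fin.ext hi : i = ⟨0, hn⟩) ▸ hk, fun hk => ⟨⟨0, hn⟩, rfl, hk⟩⟩
  have hEul : Eul n d = #{π | descents n π = d} := by simp only [Eul, Nat.cast_inj]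
  simp only [hA, hEul]
  rw [sum_mul_card_fiber, sum_permWord_zero_add_one hn]
  intro π _
  have := permWord_lt π hn
  rw [mem_Icc]
  omega

theorem stmt7 (n : ℕ) (hn : 1 ≤ n) (d : ℕ) (hd : d ≤ n - 1) :
    ∑ k ∈ Finset.Icc 1 n, k * A n (d : ℤ) k = (d + 1) * Eul n (d : ℤ) :=
  stmt7_general n hn d
end
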